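/- Let 𝓗 be a finite nonempty family of finite simple graphs with γ_𝓗 ≥ 1, and let n ≥ γ_𝓗 be a positive integer. Then spex(n, 𝓗_sub) ≥ √(γ_𝓗 (n − γ_𝓗)). -/

import Mathlib

open Matrix

namespace SubdivPaper

/-- A vertex set is independent in `G`. -/
def IsIndep {V : Type*} (G : SimpleGraph V) (s : Set V) : Prop :=
  s.Pairwise fun u v => ¬ G.Adj u v

/-- The independence number `α(G)` of a finite graph `G`. -/
noncomputable def indepNum {V : Type*} [Fintype V] (G : SimpleGraph V) : ℕ :=
  sSup {k : ℕ | ∃ s : Finset V, IsIndep G ↑s ∧ s.card = k}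

/-- `γ_H := |V(H)| - α(H) - 1`. -/
noncomputable def gammaOf {V : Type*} [Fintype V] (G : SimpleGraph V) : ℕ :=
  Fintype.card V - indepNum G - 1

/-- The set of internal vertices of a walk (support minus the two endpoints). -/
def WalkInternal {V : Type*} {G : SimpleGraph V} {a b : V} (p : G.Walk a b) : Set V :=
  {w | w ∈ p.support ∧ w ≠ a ∧ w ≠ b}

/-- `G` contains a subdivision of `H`: there are an injective map `φ` on vertices and,
for each edge `uv` of `H`, a path in `G` joining `φ u` and `φ v`, such that these paths are
pairwise internally vertex-disjoint and no internal vertex lies in the image of `φ`. -/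
def ContainsSubdiv {V W : Type*} (G : SimpleGraph V) (H : SimpleGraph W) : Prop :=
  ∃ φ : W → V, Function.Injective φ ∧
    ∃ P : ∀ ⦃u v : W⦄, H.Adj u v → G.Walk (φ u) (φ v),
      (∀ ⦃u v : W⦄ (h : H.Adj u v), (P h).IsPath) ∧
      (∀ ⦃u v : W⦄ (h : H.Adj u v), P h.symm = (P h).reverse) ∧
      (∀ ⦃u v : W⦄ (h : H.Adj u v), ∀ w ∈ WalkInternal (P h), w ∉ Set.range φ) ∧
      (∀ ⦃u v u' v' : W⦄ (h : H.Adj u v) (h' : H.Adj u' v'),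
        s(u, v) ≠ s(u', v') → WalkInternal (P h) ∩ WalkInternal (P h') = ∅)

variable {ι : Type*}

/-- `G` is `𝓗`-subdivision-free. -/
def SubdivFreeFam (m : ι → ℕ) (ℋ : ∀ i, SimpleGraph (Fin (m i)))
    {V : Type*} (G : SimpleGraph V) : Prop :=
  ∀ i, ¬ ContainsSubdiv G (ℋ i)

/-- `γ_𝓗 := min_{H ∈ 𝓗} γ_H`. -/
noncomputable def gammaFam (m : ι → ℕ) (ℋ : ∀ i, SimpleGraph (Fin (m i))) : ℕ :=
  sInf {g : ℕ | ∃ i, gammaOf (ℋ i) = g}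

open Classical in
/-- The real adjacency matrix of a graph on `Fin n`. -/
noncomputable def adjMat {n : ℕ} (G : SimpleGraph (Fin n)) : Matrix (Fin n) (Fin n) ℝ :=
  Matrix.of fun u v => if G.Adj u v then (1 : ℝ) else 0

/-- The spectral radius: the largest eigenvalue of the adjacency matrix. -/
noncomputable def specRad {n : ℕ} (G : SimpleGraph (Fin n)) : ℝ :=
  sSup {t : ℝ | ∃ x : Fin n → ℝ, x ≠ 0 ∧ adjMat G *ᵥ x = t • x}

/-- `spex(n, 𝓗_sub)`. -/
noncomputable def spex (n : ℕ) (m : ι → ℕ) (ℋ : ∀ i, SimpleGraph (Fin (m i))) : ℝ :=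
  sSup {ρ : ℝ | ∃ G : SimpleGraph (Fin n), SubdivFreeFam m ℋ G ∧ specRad G = ρ}

/-- `SPEX(n, 𝓗_sub)`: the `n`-vertex `𝓗`-subdivision-free graphs of maximum spectral radius. -/
def SPEX (n : ℕ) (m : ι → ℕ) (ℋ : ∀ i, SimpleGraph (Fin (m i))) :
    Set (SimpleGraph (Fin n)) :=
  {G | SubdivFreeFam m ℋ G ∧
    ∀ G' : SimpleGraph (Fin n), SubdivFreeFam m ℋ G' → specRad G' ≤ specRad G}

/-- The generalized book `B_{s,t} = K_s ∨ (t K_1)`. -/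
def book (s t : ℕ) : SimpleGraph (Fin (s + t)) :=
  SimpleGraph.fromRel fun u v => (u : ℕ) < s ∨ (v : ℕ) < s

/-- `G` contains a spanning subgraph isomorphic to `B`. -/
def HasSpanningSubgraphIso {V W : Type*} (G : SimpleGraph V) (B : SimpleGraph W) : Prop :=
  ∃ f : W ≃ V, ∀ u v : W, B.Adj u v → G.Adj (f u) (f v)

/-- The graph obtained from `G` by adding the edge `uv`. -/
def addEdge {V : Type*} (G : SimpleGraph V) (u v : V) : SimpleGraph V :=
  G ⊔ SimpleGraph.fromEdgeSet {s(u, v)}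

/-- `G` is `𝓗`-subdivision-saturated. -/
def SubdivSatFam (m : ι → ℕ) (ℋ : ∀ i, SimpleGraph (Fin (m i)))
    {V : Type*} (G : SimpleGraph V) : Prop :=
  SubdivFreeFam m ℋ G ∧
    ∀ u v : V, u ≠ v → ¬ G.Adj u v → ∃ i, ContainsSubdiv (addEdge G u v) (ℋ i)

/-- `max_{H ∈ 𝓗} |V(H)|`. -/
noncomputable def maxOrderFam (m : ι → ℕ) : ℕ := sSup (Set.range m)

/-- The minimum order of a graph `H ∈ 𝓗` with `γ_H = γ_𝓗` (the order of a minimal graph). -/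
noncomputable def minOrderAtGamma (m : ι → ℕ) (ℋ : ∀ i, SimpleGraph (Fin (m i))) : ℕ :=
  sInf {k : ℕ | ∃ i, gammaOf (ℋ i) = gammaFam m ℋ ∧ m i = k}

/-- `α_𝓗`: the independence number of a minimal graph with respect to `𝓗`. -/
noncomputable def alphaFam (m : ι → ℕ) (ℋ : ∀ i, SimpleGraph (Fin (m i))) : ℕ :=
  minOrderAtGamma m ℋ - gammaFam m ℋ - 1

/-- `S'' = {v ∉ L : L ⊆ N_G(v)}`. -/
def Sdd {n : ℕ} (G : SimpleGraph (Fin n)) (L : Finset (Fin n)) : Set (Fin n) :=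
  {v | v ∉ L ∧ ∀ w ∈ L, G.Adj w v}

/-- `S' = (V ∖ L) ∖ S''`. -/
def Sd {n : ℕ} (G : SimpleGraph (Fin n)) (L : Finset (Fin n)) : Set (Fin n) :=
  {v | v ∉ L ∧ ¬ ∀ w ∈ L, G.Adj w v}

/-- `L^λ = {u : x_u ≥ (10 C)^{-λ} x_{u*}}`. -/
def Lset {n : ℕ} (x : Fin n → ℝ) (u₀ : Fin n) (C : ℝ) (lam : ℕ) : Set (Fin n) :=
  {u | ((10 * C) ^ lam)⁻¹ * x u₀ ≤ x u}

/-- `N_i(u)`: vertices at distance exactly `i` from `u`. -/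
def Nset {n : ℕ} (G : SimpleGraph (Fin n)) (u : Fin n) (i : ℕ) : Set (Fin n) :=
  {v | G.dist u v = i}

/-- `H[S] ∈ Γ_s(H)` is irreducible: `|S| = s` and no `s`-vertex induced subgraph of `H` is
isomorphic to a proper subgraph of `H[S]`. -/
def IrreducibleInduced {h : ℕ} (H : SimpleGraph (Fin h)) (s : ℕ) (S : Finset (Fin h)) : Prop :=
  S.card = s ∧
    ¬ ∃ (T : Finset (Fin h)) (B' : SimpleGraph ((S : Set (Fin h)))),
        T.card = s ∧ B' ≤ SimpleGraph.induce (S : Set (Fin h)) H ∧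
        B' ≠ SimpleGraph.induce (S : Set (Fin h)) H ∧
        Nonempty (SimpleGraph.induce (T : Set (Fin h)) H ≃g B')

/-- `Q` is `Γ(𝓗)`-subdivision-free. -/
def GammaFree (m : ι → ℕ) (ℋ : ∀ i, SimpleGraph (Fin (m i)))
    {X : Type*} (Q : SimpleGraph X) : Prop :=
  ∀ (i : ι) (S : Finset (Fin (m i))),
    IrreducibleInduced (ℋ i) (m i - gammaFam m ℋ) S →
    ¬ ContainsSubdiv Q (SimpleGraph.induce (S : Set (Fin (m i))) (ℋ i))

/-- `Q` is `Γ(𝓗)`-subdivision-saturated. -/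
def GammaSat (m : ι → ℕ) (ℋ : ∀ i, SimpleGraph (Fin (m i)))
    {X : Type*} (Q : SimpleGraph X) : Prop :=
  GammaFree m ℋ Q ∧
    ∀ u v : X, u ≠ v → ¬ Q.Adj u v →
      ∃ (i : ι) (S : Finset (Fin (m i))),
        IrreducibleInduced (ℋ i) (m i - gammaFam m ℋ) S ∧
        ContainsSubdiv (addEdge Q u v) (SimpleGraph.induce (S : Set (Fin (m i))) (ℋ i))

/-- `G` is `{H}`-subdivision-saturated (single forbidden graph). -/
def SubdivSatSingle {W V : Type*} (H : SimpleGraph W) (G : SimpleGraph V) : Prop :=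
  ¬ ContainsSubdiv G H ∧
    ∀ u v : V, u ≠ v → ¬ G.Adj u v → ContainsSubdiv (addEdge G u v) H

/-!
The complete bipartite graph `K_{γ, n-γ}` (with `γ = γ_𝓗`) has the eigenvalue `√(γ (n - γ))`,
and its `γ`-vertex side covers all of its edges. A subdivision of `H` in a graph with a vertex
cover `K` yields a vertex cover of `H` with at most `|K|` vertices, whose complement is independent
in `H`; hence `γ_H < |K|` whenever `γ_H > 0`. So `K_{γ, n-γ}` is `𝓗`-subdivision-free.
-/

open Finset SimpleGraph

lemma IsIndep.card_le_indepNum {V : Type*} [Fintype V] {G : SimpleGraph V} {s : Finset V}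
    (hs : IsIndep G s) : #s ≤ indepNum G :=
  le_csSup ⟨Fintype.card V, by rintro _ ⟨t, -, rfl⟩; exact card_le_univ t⟩ ⟨s, hs, rfl⟩

lemma gammaOf_lt_card_of_isVertexCover {W : Type*} [Fintype W] [DecidableEq W]
    {H : SimpleGraph W} {C : Finset W} (hC : H.IsVertexCover C) (hH : 0 < gammaOf H) :
    gammaOf H < #C := by
  have hindep : IsIndep H ↑Cᶜ := by
    rw [coe_compl]
    exact isIndepSet_compl_iff_isVertexCover.2 hC
  have := hindep.card_le_indepNum
  rw [card_compl] at this
  unfold gammaOf at hH ⊢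
  omega

lemma adj_or_exists_adj_mem_walkInternal {V : Type*} {G : SimpleGraph V} {a b : V}
    (p : G.Walk a b) (hab : a ≠ b) :
    G.Adj a b ∨ ∃ s, G.Adj a s ∧ s ∈ WalkInternal p := by
  cases p with
  | nil => exact absurd rfl hab
  | @cons _ c _ h q =>
    by_cases hc : c = b
    · subst hc
      exact Or.inl h
    · exact Or.inr ⟨c, h, List.mem_cons_of_mem _ q.start_mem_support, h.ne', hc⟩

/-- Each vertex `w` of the cover is charged to a vertex of `K`: either `φ w` itself or an
internal vertex of the path of an edge `wv` with `w < v`. The charges are distinct because the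
paths are internally disjoint and avoid the branch vertices. -/
theorem ContainsSubdiv.exists_isVertexCover_card_le {V W : Type*} [Fintype W] [LinearOrder W]
    {G : SimpleGraph V} {H : SimpleGraph W} {K : Finset V} (hK : G.IsVertexCover K)
    (hGH : ContainsSubdiv G H) : ∃ C : Finset W, H.IsVertexCover C ∧ #C ≤ #K := by
  classical
  obtain ⟨φ, hφ, P, -, -, hint, hdisj⟩ := hGH
  let charge (w : W) (κ : V) : Prop :=
    κ = φ w ∨ ∃ v, ∃ e : H.Adj w v, w < v ∧ κ ∈ WalkInternal (P e)
  refine ⟨univ.filter fun w => ∃ κ ∈ K, charge w κ, ?_, ?_⟩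
  · have hcover : ∀ ⦃u v⦄ (e : H.Adj u v), u < v → ∃ κ ∈ K, charge u κ ∨ charge v κ := by
      intro u v e huv
      by_cases hu : φ u ∈ K
      · exact ⟨_, hu, Or.inl (Or.inl rfl)⟩
      by_cases hv : φ v ∈ K
      · exact ⟨_, hv, Or.inr (Or.inl rfl)⟩
      rcases adj_or_exists_adj_mem_walkInternal (P e) (hφ.ne e.ne) with hadj | ⟨s, hadj, hs⟩
      · exact ((hK hadj).elim hu hv).elim
      · exact ⟨s, (hK hadj).resolve_left hu, Or.inl (Or.inr ⟨v, e, huv, hs⟩)⟩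
    intro u v e
    simp only [coe_filter, mem_univ, true_and]
    rcases lt_or_gt_of_ne e.ne with huv | hvu
    · obtain ⟨κ, hκ, hu | hv⟩ := hcover e huv
      exacts [Or.inl ⟨κ, hκ, hu⟩, Or.inr ⟨κ, hκ, hv⟩]
    · obtain ⟨κ, hκ, hv | hu⟩ := hcover e.symm hvu
      exacts [Or.inr ⟨κ, hκ, hv⟩, Or.inl ⟨κ, hκ, hu⟩]
  · refine card_le_card_of_forall_subsingleton charge (fun w hw => by simpa using hw) ?_
    rintro κ - w ⟨-, hw⟩ w' ⟨-, hw'⟩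
    rcases hw with rfl | ⟨v, e, hwv, hκ⟩ <;> rcases hw' with h | ⟨v', e', hwv', hκ'⟩
    · exact hφ h
    · exact absurd ⟨w, rfl⟩ (hint e' _ hκ')
    · exact absurd ⟨w', h.symm⟩ (hint e _ hκ)
    · have hedge : s(w, v) = s(w', v') := by
        by_contra hne
        exact Set.eq_empty_iff_forall_notMem.1 (hdisj e e' hne) κ ⟨hκ, hκ'⟩
      rcases Sym2.eq_iff.1 hedge with ⟨rfl, -⟩ | ⟨rfl, rfl⟩
      · rfl
      · exact absurd (hwv.trans hwv') (lt_irrefl _)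

lemma not_containsSubdiv_of_isVertexCover {V W : Type*} [Fintype W] [LinearOrder W]
    {G : SimpleGraph V} {H : SimpleGraph W} {K : Finset V} (hK : G.IsVertexCover K)
    (hKH : #K ≤ gammaOf H) (hH : 0 < gammaOf H) : ¬ ContainsSubdiv G H := by
  intro hGH
  obtain ⟨C, hC, hCK⟩ := hGH.exists_isVertexCover_card_le hK
  exact (gammaOf_lt_card_of_isVertexCover hC hH).not_ge (hCK.trans hKH)

lemma subdivFreeFam_of_isVertexCover {ι : Type*} {m : ι → ℕ}
    {ℋ : ∀ i, SimpleGraph (Fin (m i))} (hγ : 1 ≤ gammaFam m ℋ) {V : Type*}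
    {G : SimpleGraph V} {K : Finset V} (hK : G.IsVertexCover K) (hKγ : #K ≤ gammaFam m ℋ) :
    SubdivFreeFam m ℋ G := fun i => by
  have hi : gammaFam m ℋ ≤ gammaOf (ℋ i) := Nat.sInf_le ⟨i, rfl⟩
  exact not_containsSubdiv_of_isVertexCover hK (hKγ.trans hi) (by omega)

lemma finite_eigenvalues {K ι : Type*} [Field K] [Fintype ι] [DecidableEq ι]
    (A : Matrix ι ι K) : {t : K | ∃ x : ι → K, x ≠ 0 ∧ A *ᵥ x = t • x}.Finite :=
  (Module.End.finite_hasEigenvalue (Matrix.toLin' A)).subset fun _ ⟨x, hx, h⟩ =>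
    Module.End.hasEigenvalue_of_hasEigenvector
      ⟨Module.End.mem_eigenspace_iff.2 (by simpa using h), hx⟩

lemma le_specRad {n : ℕ} {G : SimpleGraph (Fin n)} {t : ℝ} {x : Fin n → ℝ} (hx : x ≠ 0)
    (h : adjMat G *ᵥ x = t • x) : t ≤ specRad G :=
  le_csSup (finite_eigenvalues _).bddAbove ⟨x, hx, h⟩

lemma specRad_le_spex {ι : Type*} {m : ι → ℕ} {ℋ : ∀ i, SimpleGraph (Fin (m i))} {n : ℕ}
    {G : SimpleGraph (Fin n)} (hG : SubdivFreeFam m ℋ G) : specRad G ≤ spex n m ℋ :=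
  le_csSup ((Set.finite_range specRad).subset (by rintro _ ⟨G, -, rfl⟩; exact ⟨G, rfl⟩)).bddAbove
    ⟨G, hG, rfl⟩

lemma adjMat_eq_adjMatrix {n : ℕ} (G : SimpleGraph (Fin n)) [DecidableRel G.Adj] :
    adjMat G = G.adjMatrix ℝ := by
  ext u v
  simp [adjMat, adjMatrix_apply]

def completeBipartiteOn {V : Type*} (s : Set V) : SimpleGraph V where
  Adj u v := (u ∈ s ↔ v ∉ s)
  symm := ⟨fun _ _ => by tauto⟩
  loopless := ⟨fun _ => by tauto⟩

lemma isVertexCover_completeBipartiteOn {V : Type*} (s : Set V) :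
    (completeBipartiteOn s).IsVertexCover s := fun _ _ h => by
  simp only [completeBipartiteOn] at h
  tauto

lemma neighborFinset_completeBipartiteOn {V : Type*} [Fintype V] [DecidableEq V] (s : Finset V)
    [DecidableRel (completeBipartiteOn (s : Set V)).Adj] (u : V) :
    (completeBipartiteOn (s : Set V)).neighborFinset u = if u ∈ s then sᶜ else s := by
  ext v
  rw [mem_neighborFinset]
  by_cases hu : u ∈ s <;> simp [completeBipartiteOn, hu]

/-- The eigenvector is `√|sᶜ|` on `s` and `√|s|` on `sᶜ`; when `sᶜ = ∅` the graph is empty and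
any nonzero vector will do. -/
theorem exists_eigenvector_completeBipartiteOn {V : Type*} [Fintype V] [DecidableEq V]
    {s : Finset V} [DecidableRel (completeBipartiteOn (s : Set V)).Adj] (hs : s.Nonempty) :
    ∃ x : V → ℝ, x ≠ 0 ∧
      (completeBipartiteOn (s : Set V)).adjMatrix ℝ *ᵥ x = √((#s * #sᶜ : ℕ) : ℝ) • x := by
  rcases sᶜ.eq_empty_or_nonempty with hc | hc
  · have : Nonempty V := ⟨hs.choose⟩
    refine ⟨1, one_ne_zero, funext fun u => ?_⟩
    have hu : u ∈ s := by simpa [hc] using mem_compl (s := s) (a := u)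
    simp [neighborFinset_completeBipartiteOn, hu, hc]
  refine ⟨fun u => if u ∈ s then √(#sᶜ : ℝ) else √(#s : ℝ), ?_, funext fun u => ?_⟩
  · obtain ⟨v, hv⟩ := hs
    intro h
    have := congrFun h v
    simp [hv, hc.ne_empty] at this
  · have hsq : √((#s * #sᶜ : ℕ) : ℝ) = √(#s : ℝ) * √(#sᶜ : ℝ) := by
      push_cast
      exact Real.sqrt_mul (Nat.cast_nonneg _) _
    by_cases hu : u ∈ s
    · simp only [adjMatrix_mulVec_apply, neighborFinset_completeBipartiteOn, hu, if_true,
        Pi.smul_apply, smul_eq_mul, hsq]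
      rw [sum_congr rfl fun v hv => if_neg (mem_compl.1 hv), sum_const, nsmul_eq_mul,
        mul_assoc, Real.mul_self_sqrt (Nat.cast_nonneg _), mul_comm]
    · simp only [adjMatrix_mulVec_apply, neighborFinset_completeBipartiteOn, hu, if_false,
        Pi.smul_apply, smul_eq_mul, hsq]
      rw [sum_congr rfl fun v hv => if_pos hv, sum_const, nsmul_eq_mul,
        mul_comm (√_), mul_assoc, Real.mul_self_sqrt (Nat.cast_nonneg _), mul_comm]

theorem statement4_general {ι : Type*}
    (m : ι → ℕ) (ℋ : ∀ i, SimpleGraph (Fin (m i)))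
    (hγ : 1 ≤ gammaFam m ℋ)
    (n : ℕ) (hn : gammaFam m ℋ ≤ n) :
    Real.sqrt ((gammaFam m ℋ * (n - gammaFam m ℋ) : ℕ) : ℝ) ≤ spex n m ℋ := by
  classical
  obtain ⟨s, -, hs⟩ := exists_subset_card_eq (s := (univ : Finset (Fin n))) (by simpa using hn)
  have hfree : SubdivFreeFam m ℋ (completeBipartiteOn (s : Set (Fin n))) :=
    subdivFreeFam_of_isVertexCover hγ (isVertexCover_completeBipartiteOn _) hs.le
  obtain ⟨x, hx, hAx⟩ := exists_eigenvector_completeBipartiteOn (card_pos.1 (hs ▸ hγ))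
  rw [← adjMat_eq_adjMatrix] at hAx
  calc √((gammaFam m ℋ * (n - gammaFam m ℋ) : ℕ) : ℝ) = √((#s * #sᶜ : ℕ) : ℝ) := by
        rw [card_compl, Fintype.card_fin, hs]
    _ ≤ specRad (completeBipartiteOn (s : Set (Fin n))) := le_specRad hx hAx
    _ ≤ spex n m ℋ := specRad_le_spex hfree

theorem statement4 {ι : Type*} [Fintype ι] [Nonempty ι]
    (m : ι → ℕ) (ℋ : ∀ i, SimpleGraph (Fin (m i)))
    (hγ : 1 ≤ gammaFam m ℋ)
    (n : ℕ) (hn0 : 1 ≤ n) (hn : gammaFam m ℋ ≤ n) :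
    Real.sqrt ((gammaFam m ℋ * (n - gammaFam m ℋ) : ℕ) : ℝ) ≤ spex n m ℋ :=
  statement4_general m ℋ hγ n hn

end SubdivPaper
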